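/- Let n ≥ 1 and let k₀, k₁,…,k_{2n} be integers satisfying |k_j − k_{j+1}| ≥ 1 for every j = 0,1,…,2n−1. Then the integral I''ₙ = ∫_{−π}^{π} cos(η/2) · [sin((k₀+k_{2n})η/2)/sin(η/2)] · ∏_{j=0}^{2n−1} [sin((k_j−k_{j+1})η/2) / ((k_j−k_{j+1}) sin(η/2))] dη satisfies |I''ₙ| ≤ 2π. -/

import Mathlib

/-!
Each factor `sin (d η / 2) / (d sin (η / 2))` is the average of the `|d|` cosines
`cos ((2r - |d| + 1) η / 2)` (Dirichlet kernel), and products of sub-convex combinations of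
cosines `cos (l η / 2)` are again such combinations, with the parities of the frequencies adding.
Hence `cos (η / 2) ∏ ⋯` is a sub-convex combination of cosines `cos (l η / 2)` with `l + m` odd,
`m = k₀ + k_{2n}`. For such `l`, `sin (m η / 2) cos (l η / 2) / sin (η / 2)` is the mean of two
quotients `sin (b η / 2) / sin (η / 2)` with `b` odd, and each of these integrates to `± 2π`:
for `b = 1` the quotient is `1`, and raising `b` by `2` adds `2 cos ((b + 1) η / 2)`.
-/

open Real intervalIntegral MeasureTheory Finset

lemma ae_sin_half_ne_zero : ∀ᵐ η : ℝ, sin (η / 2) ≠ 0 := by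
  have hzeros : {η : ℝ | sin (η / 2) = 0} ⊆ Set.range fun k : ℤ => 2 * (k * π) := by
    intro η hη
    obtain ⟨k, hk⟩ := sin_eq_zero_iff.mp hη
    exact ⟨k, by linarith⟩
  exact measure_eq_zero_iff_ae_notMem.mp (((Set.countable_range _).mono hzeros).measure_zero _)

lemma integral_cos_nat_mul (n : ℕ) (hn : n ≠ 0) : ∫ η in (-π)..π, cos (n * η) = 0 := by
  have hn' : (n : ℝ) ≠ 0 := Nat.cast_ne_zero.mpr hn
  simp [integral_comp_mul_left (fun x => cos x) hn', sin_nat_mul_pi]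

lemma intervalIntegrable_and_integral_sin_odd_div_sin_half (n : ℕ) :
    IntervalIntegrable (fun η => sin ((2 * n + 1) * η / 2) / sin (η / 2)) volume (-π) π ∧
      ∫ η in (-π)..π, sin ((2 * n + 1) * η / 2) / sin (η / 2) = 2 * π := by
  induction n with
  | zero =>
    have h : (fun _ => 1) =ᵐ[volume] fun η : ℝ => sin ((2 * (0 : ℕ) + 1) * η / 2) / sin (η / 2) := by
      filter_upwards [ae_sin_half_ne_zero] with η hη
      simp [hη]
    refine ⟨intervalIntegrable_const.congr_ae (ae_restrict_of_ae h), ?_⟩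
    rw [← integral_congr_ae (h.mono fun η hη _ => hη)]
    simp [two_mul]
  | succ n ih =>
    have h : (fun η => sin ((2 * n + 1) * η / 2) / sin (η / 2) + 2 * cos ((n + 1 : ℕ) * η))
        =ᵐ[volume] fun η : ℝ => sin ((2 * (n + 1 : ℕ) + 1) * η / 2) / sin (η / 2) := by
      filter_upwards [ae_sin_half_ne_zero] with η hη
      have hsin : sin ((2 * (n + 1 : ℕ) + 1) * η / 2)
          = sin ((2 * n + 1) * η / 2) + 2 * cos ((n + 1 : ℕ) * η) * sin (η / 2) := by
        rw [← sub_eq_iff_eq_add', sin_sub_sin]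
        push_cast
        ring_nf
      rw [hsin, add_div, mul_div_cancel_right₀ _ hη]
    have hcos : IntervalIntegrable (fun η => 2 * cos ((n + 1 : ℕ) * η)) volume (-π) π :=
      (by fun_prop : Continuous fun η : ℝ => 2 * cos ((n + 1 : ℕ) * η)).intervalIntegrable _ _
    refine ⟨(ih.1.add hcos).congr_ae (ae_restrict_of_ae h), ?_⟩
    rw [← integral_congr_ae (h.mono fun η hη _ => hη), integral_add ih.1 hcos, ih.2,
      intervalIntegral.integral_const_mul, integral_cos_nat_mul _ n.succ_ne_zero]
    ring

lemma intervalIntegrable_sin_div_sin_half {b : ℤ} (hb : Odd b) :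
    IntervalIntegrable (fun η => sin (b * η / 2) / sin (η / 2)) volume (-π) π := by
  obtain ⟨n, hn⟩ := Int.natAbs_odd.mpr hb
  rcases Int.natAbs_eq b with h | h <;> rw [h, hn]
  · simpa using (intervalIntegrable_and_integral_sin_odd_div_sin_half n).1
  · simp only [Int.cast_neg, neg_mul, neg_div, sin_neg]
    exact_mod_cast (intervalIntegrable_and_integral_sin_odd_div_sin_half n).1.neg

lemma abs_integral_sin_div_sin_half {b : ℤ} (hb : Odd b) :
    |∫ η in (-π)..π, sin (b * η / 2) / sin (η / 2)| = 2 * π := by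
  obtain ⟨n, hn⟩ := Int.natAbs_odd.mpr hb
  rcases Int.natAbs_eq b with h | h <;> rw [h, hn]
  · simp [(intervalIntegrable_and_integral_sin_odd_div_sin_half n).2, pi_pos.le]
  · simp only [Int.cast_neg, neg_mul, neg_div, sin_neg]
    simp [(intervalIntegrable_and_integral_sin_odd_div_sin_half n).2, pi_pos.le]

lemma sin_div_sin_half_mul_cos (m l : ℤ) (η : ℝ) :
    sin (m * η / 2) / sin (η / 2) * cos (l * η / 2) =
      (sin ((m + l : ℤ) * η / 2) / sin (η / 2) + sin ((m - l : ℤ) * η / 2) / sin (η / 2)) / 2 := by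
  have h : sin (m * η / 2) * cos (l * η / 2) =
      (sin ((m + l : ℤ) * η / 2) + sin ((m - l : ℤ) * η / 2)) / 2 := by
    rw [eq_div_iff two_ne_zero, mul_comm, ← mul_assoc, two_mul_sin_mul_cos]
    push_cast
    ring_nf
  rw [div_mul_eq_mul_div, h, ← add_div, div_div, div_div, mul_comm (2 : ℝ)]

lemma intervalIntegrable_sin_div_sin_half_mul_cos {m l : ℤ} (h : Odd (m + l)) :
    IntervalIntegrable (fun η => sin (m * η / 2) / sin (η / 2) * cos (l * η / 2))
      volume (-π) π := by
  simp_rw [sin_div_sin_half_mul_cos]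
  exact ((intervalIntegrable_sin_div_sin_half h).add
    (intervalIntegrable_sin_div_sin_half (Int.odd_sub.mpr (Int.odd_add.mp h)))).div_const 2

lemma abs_integral_sin_div_sin_half_mul_cos_le {m l : ℤ} (h : Odd (m + l)) :
    |∫ η in (-π)..π, sin (m * η / 2) / sin (η / 2) * cos (l * η / 2)| ≤ 2 * π := by
  have h' : Odd (m - l) := Int.odd_sub.mpr (Int.odd_add.mp h)
  simp_rw [sin_div_sin_half_mul_cos]
  rw [intervalIntegral.integral_div, integral_add (intervalIntegrable_sin_div_sin_half h)
    (intervalIntegrable_sin_div_sin_half h'), abs_div, abs_two, div_le_iff₀ two_pos]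
  calc _ ≤ _ := abs_add_le _ _
    _ = 2 * π * 2 := by
      rw [abs_integral_sin_div_sin_half h, abs_integral_sin_div_sin_half h']
      ring

lemma sin_mul_sum_range_cos (e : ℕ) (x : ℝ) :
    sin x * ∑ r ∈ range e, cos ((2 * r - e + 1) * x) = sin (e * x) := by
  have hterm : ∀ r ∈ range e, sin x * cos ((2 * r - e + 1) * x) =
      sin ((2 * (r + 1 : ℕ) - e) * x) / 2 - sin ((2 * r - e) * x) / 2 := by
    intro r _
    rw [← sub_div, eq_div_iff two_ne_zero, mul_comm, ← mul_assoc, two_mul_sin_mul_cos,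
      ← neg_sub, sin_neg]
    push_cast
    ring_nf
  rw [mul_sum, sum_congr rfl hterm, sum_range_sub (fun r : ℕ => sin ((2 * r - e) * x) / 2)]
  push_cast
  rw [mul_zero, zero_sub, neg_mul, sin_neg, two_mul, add_sub_cancel_right]
  ring

-- Only almost everywhere, since quotients by `sin (η / 2)` take the junk value `0` at its zeros.
def IsHalfCosMixture (t : ℤ) (P : ℝ → ℝ) : Prop :=
  ∃ (ι : Type) (s : Finset ι) (c : ι → ℝ) (l : ι → ℤ),
    (∀ i ∈ s, 0 ≤ c i) ∧ ∑ i ∈ s, c i ≤ 1 ∧ (∀ i ∈ s, l i ≡ t [ZMOD 2]) ∧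
      P =ᵐ[volume] fun η => ∑ i ∈ s, c i * cos (l i * η / 2)

lemma isHalfCosMixture_cos (l : ℤ) : IsHalfCosMixture l fun η => cos (l * η / 2) :=
  ⟨Unit, {()}, fun _ => 1, fun _ => l, by simp, by simp, by simp, by simp⟩

lemma isHalfCosMixture_sin_div (d : ℤ) :
    IsHalfCosMixture (d + 1) fun η => sin (d * η / 2) / (d * sin (η / 2)) := by
  obtain ⟨e, hd⟩ := Int.eq_nat_or_neg d
  have hratio : ∀ η, sin (d * η / 2) / (d * sin (η / 2)) = sin (e * η / 2) / (e * sin (η / 2)) := by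
    rcases hd with rfl | rfl
    · simp
    · intro η
      push_cast
      rw [neg_mul, neg_div, sin_neg, neg_mul, neg_div_neg_eq]
  refine ⟨ℕ, range e, fun _ => (e : ℝ)⁻¹, fun r => 2 * r - e + 1, fun _ _ => by positivity,
    ?_, fun r _ => ?_, ?_⟩
  · simpa using mul_inv_le_one (a := (e : ℝ))
  · rcases hd with rfl | rfl <;> (unfold Int.ModEq; dsimp only; omega)
  · filter_upwards [ae_sin_half_ne_zero] with η hη
    rw [hratio, mul_div_assoc, ← sin_mul_sum_range_cos, mul_comm (e : ℝ),
      mul_div_mul_left _ _ hη, div_eq_inv_mul, mul_sum]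
    refine sum_congr rfl fun r _ => ?_
    push_cast
    ring_nf

namespace IsHalfCosMixture

lemma mul {t u : ℤ} {P Q : ℝ → ℝ} (hP : IsHalfCosMixture t P) (hQ : IsHalfCosMixture u Q) :
    IsHalfCosMixture (t + u) fun η => P η * Q η := by
  obtain ⟨ι, s, c, l, hc, hsum, hl, hP⟩ := hP
  obtain ⟨κ, s', c', l', hc', hsum', hl', hQ⟩ := hQ
  refine ⟨ι × κ × Bool, s ×ˢ s' ×ˢ univ, fun p => c p.1 * c' p.2.1 / 2,
    fun p => if p.2.2 then l p.1 + l' p.2.1 else l p.1 - l' p.2.1, ?_, ?_, ?_, ?_⟩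
  · rintro ⟨i, j, b⟩ hp
    simp only [mem_product] at hp
    have := hc i hp.1
    have := hc' j hp.2.1
    positivity
  · calc ∑ p ∈ s ×ˢ s' ×ˢ univ, c p.1 * c' p.2.1 / 2 = (∑ i ∈ s, c i) * ∑ j ∈ s', c' j := by
          simp only [sum_product, sum_const, card_univ, Fintype.card_bool, sum_mul_sum,
            nsmul_eq_mul]
          ring_nf
      _ ≤ 1 := mul_le_one₀ hsum (sum_nonneg hc') hsum'
  · rintro ⟨i, j, b⟩ hp
    simp only [mem_product] at hp
    have h1 := hl i hp.1
    have h2 := hl' j hp.2.1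
    unfold Int.ModEq at *
    cases b <;> simp only [Bool.false_eq_true, ↓reduceIte] <;> omega
  · filter_upwards [hP, hQ] with η hPη hQη
    rw [hPη, hQη, sum_mul_sum, sum_product]
    refine sum_congr rfl fun i _ => ?_
    rw [sum_product]
    refine sum_congr rfl fun j _ => ?_
    have hcc := two_mul_cos_mul_cos (l i * η / 2) (l' j * η / 2)
    rw [← sub_div, ← add_div, ← sub_mul, ← add_mul] at hcc
    rw [Fintype.sum_bool]
    simp only [↓reduceIte, Bool.false_eq_true]
    push_cast
    linear_combination (c i * c' j / 2) * hcc

lemma finset_prod {ι : Type*} (s : Finset ι) {t : ι → ℤ} {P : ι → ℝ → ℝ}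
    (h : ∀ i ∈ s, IsHalfCosMixture (t i) (P i)) :
    IsHalfCosMixture (∑ i ∈ s, t i) fun η => ∏ i ∈ s, P i η := by
  classical
  induction s using Finset.induction_on with
  | empty => simpa using isHalfCosMixture_cos 0
  | insert a s ha ih =>
    simp_rw [prod_insert ha, sum_insert ha]
    exact (h a (mem_insert_self a s)).mul (ih fun i hi => h i (mem_insert_of_mem hi))

lemma abs_integral_sin_div_sin_half_mul_le {t m : ℤ} {P : ℝ → ℝ} (hP : IsHalfCosMixture t P)
    (h : Odd (m + t)) :
    |∫ η in (-π)..π, sin (m * η / 2) / sin (η / 2) * P η| ≤ 2 * π := by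
  obtain ⟨ι, s, c, l, hc, hsum, hl, hP⟩ := hP
  have hodd : ∀ i ∈ s, Odd (m + l i) := fun i hi => by
    have := hl i hi
    rw [Int.odd_iff] at h ⊢
    unfold Int.ModEq at this
    omega
  have hexpand : ∫ η in (-π)..π, sin (m * η / 2) / sin (η / 2) * P η =
      ∑ i ∈ s, c i * ∫ η in (-π)..π, sin (m * η / 2) / sin (η / 2) * cos (l i * η / 2) := by
    rw [integral_congr_ae (g := fun η => ∑ i ∈ s,
          c i * (sin (m * η / 2) / sin (η / 2) * cos (l i * η / 2)))
        (hP.mono fun η hη _ => by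
          rw [hη, mul_sum]; exact sum_congr rfl fun i _ => mul_left_comm _ _ _),
      integral_finsetSum fun i hi =>
        (intervalIntegrable_sin_div_sin_half_mul_cos (hodd i hi)).const_mul (c i)]
    exact sum_congr rfl fun i _ => intervalIntegral.integral_const_mul _ _
  calc _ ≤ ∑ i ∈ s, c i * (2 * π) := by
        rw [hexpand]
        refine (abs_sum_le_sum_abs _ _).trans (sum_le_sum fun i hi => ?_)
        rw [abs_mul, abs_of_nonneg (hc i hi)]
        exact mul_le_mul_of_nonneg_left (abs_integral_sin_div_sin_half_mul_cos_le (hodd i hi))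
          (hc i hi)
    _ ≤ 2 * π := by
        rw [← sum_mul]
        exact mul_le_of_le_one_left (by positivity) hsum

end IsHalfCosMixture

theorem abs_In''_le_two_pi (n : ℕ) (k : ℕ → ℤ) :
    |∫ η in (-π)..π,
        Real.cos (η / 2) *
          (Real.sin (((k 0 + k (2 * n) : ℤ) : ℝ) * η / 2) / Real.sin (η / 2)) *
          ∏ j ∈ Finset.range (2 * n),
            Real.sin (((k j - k (j + 1) : ℤ) : ℝ) * η / 2) /
              (((k j - k (j + 1) : ℤ) : ℝ) * Real.sin (η / 2))|
      ≤ 2 * π := by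
  have hcos : IsHalfCosMixture 1 fun η => cos (η / 2) := by simpa using isHalfCosMixture_cos 1
  have hmix := hcos.mul <| IsHalfCosMixture.finset_prod (range (2 * n)) fun j _ =>
    isHalfCosMixture_sin_div (k j - k (j + 1))
  have hodd : Odd (k 0 + k (2 * n) + (1 + ∑ j ∈ range (2 * n), (k j - k (j + 1) + 1))) := by
    rw [sum_add_distrib, sum_range_sub', sum_const, card_range]
    exact ⟨k 0 + n, by simp; ring⟩
  calc _ = |∫ η in (-π)..π, sin ((k 0 + k (2 * n) : ℤ) * η / 2) / sin (η / 2) *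
        (cos (η / 2) * ∏ j ∈ range (2 * n),
          sin ((k j - k (j + 1) : ℤ) * η / 2) / ((k j - k (j + 1) : ℤ) * sin (η / 2)))| := by
        congr 1
        exact integral_congr fun η _ => by ring
    _ ≤ 2 * π := hmix.abs_integral_sin_div_sin_half_mul_le hodd
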